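/- A constrained blue edge terminator gadget can be constructed using any gadget that satisfies the same constraints as an NCL OR vertex: fixing the OR-gadget configuration corresponding to one blue edge pointing in and the other two pointing out, and blocking off the two outward tunnels, yields a gadget that, when attached to a tunnel representing a blue edge, forces the blue block representing that edge's orientation to remain inside itself, so that the inflow constraint is not violated. -/

import Mathlib

/-!
## Abstract NCL gadgets

In reductions from Nondeterministic Constraint Logic, each vertex of the NCL
graph is represented by a gadget with up to three entry points (tunnels),
each lying in one of three slots (top/middle/bottom) on the left or right
side of the gadget; each entry point carries a blue (weight-two) or red
(weight-one) NCL edge.  The orientation of an edge is recorded by a Boolean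
(`true` = the edge points into the gadget), and the behaviour of a gadget is
the set of edge orientations it admits.  Gadgets can be combined by blocking
off an entry point (fixing the corresponding edge to point outwards) and by
gluing an entry point on the right side of one gadget to an entry point on
the left side of another via a connecting tunnel, re-placing the remaining
entry points on the composite.  This framework is independent of the Hanano
Puzzle.
-/

namespace NCLGadget

/-- The side of a gadget an entry point lies on. -/
inductive Side : Type
  | left | right
deriving DecidableEq

instance : Fintype Side where
  elems := {Side.left, Side.right}
  complete := by intro x; cases x <;> simp

/-- NCL edge colors: blue has weight two, red has weight one. -/
inductive EColor : Type
  | blue | red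
deriving DecidableEq

instance : Fintype EColor where
  elems := {EColor.blue, EColor.red}
  complete := by intro x; cases x <;> simp

/-- An entry point slot: a side together with a top/middle/bottom position. -/
abbrev Slot : Type := Side × Fin 3

/-- An interface assigns to each slot either `none` (blocked off) or the
color of the edge entering there. -/
abbrev Interface : Type := Slot → Option EColor

/-- The open entry points of an interface. -/
def openSlots (I : Interface) : Finset Slot :=
  Finset.univ.filter fun s => (I s).isSome = true

/-- The entry points of an interface carrying a given edge color. -/
def colorSlots (I : Interface) (c : EColor) : Finset Slot :=
  Finset.univ.filter fun s => I s = some c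

/-- An abstract gadget: an interface together with its behaviour, i.e. the
set of admissible edge orientations (`true` = edge points in). -/
structure Gdt : Type where
  iface : Interface
  behavior : Set (Slot → Bool)

/-- A gadget satisfies the same constraints as an NCL OR vertex: it has three
blue entry points, and its admissible orientations are exactly those in which
at least one edge points inward. -/
def IsOR (G : Gdt) : Prop :=
  (openSlots G.iface).card = 3 ∧
  (∀ s, G.iface s = none ∨ G.iface s = some EColor.blue) ∧
  G.behavior = { o | ∃ s ∈ openSlots G.iface, o s = true }

/-- A gadget satisfies the same constraints as an NCL AND vertex: it has one
blue and two red entry points, and its admissible orientations are exactly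
those in which the blue edge points inward or both red edges point inward. -/
def IsAND (G : Gdt) : Prop :=
  (colorSlots G.iface EColor.blue).card = 1 ∧
  (colorSlots G.iface EColor.red).card = 2 ∧
  G.behavior = { o | (∀ s ∈ colorSlots G.iface EColor.blue, o s = true) ∨
                     (∀ s ∈ colorSlots G.iface EColor.red, o s = true) }

/-- A constrained blue edge terminator: a gadget with a single blue entry
point which forces the attached blue edge to point into it. -/
def IsTerminator (G : Gdt) : Prop :=
  (openSlots G.iface).card = 1 ∧
  (∀ s, G.iface s = none ∨ G.iface s = some EColor.blue) ∧
  G.behavior = { o | ∀ s ∈ openSlots G.iface, o s = true }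

/-- A red bend gadget: two red entry points on the same side, enforcing an
inflow constraint of one (at least one of the two red edges points in). -/
def IsRedBend (G : Gdt) : Prop :=
  (openSlots G.iface).card = 2 ∧
  (∀ s, G.iface s = none ∨ G.iface s = some EColor.red) ∧
  (∃ sd : Side, ∀ s ∈ openSlots G.iface, s.1 = sd) ∧
  G.behavior = { o | ∃ s ∈ openSlots G.iface, o s = true }

/-- Vertical mirror image of a slot. -/
def mirrorSlot (s : Slot) : Slot := (s.1, s.2.rev)

/-- Vertical mirror image of a gadget (top and bottom slots exchanged). -/
def vmirror (G : Gdt) : Gdt where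
  iface := fun s => G.iface (mirrorSlot s)
  behavior := { o | (fun s => o (mirrorSlot s)) ∈ G.behavior }

/-- `G` is obtained from `G1` by blocking off the entry point `s`: the tunnel
at `s` is walled off, so the corresponding edge is fixed pointing outwards. -/
def IsBlockOff (G1 : Gdt) (s : Slot) (G : Gdt) : Prop :=
  (G1.iface s).isSome = true ∧
  G.iface = Function.update G1.iface s none ∧
  G.behavior = { o | Function.update o s false ∈ G1.behavior }

/-- `G` is obtained by gluing entry point `s1` (on the right side of `G1`) to
entry point `s2` (on the left side of `G2`) with a connecting tunnel carrying
an edge of their common color; `ρ1`, `ρ2` re-place the remaining entry points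
of `G1` and `G2` (injectively and disjointly) on the composite gadget.  The
admissible orientations of the composite are the projections of pairs of
admissible orientations of `G1` and `G2` in which the shared edge points into
exactly one of the two gadgets. -/
def IsGlue (G1 G2 : Gdt) (s1 s2 : Slot) (ρ1 ρ2 : Slot → Slot) (G : Gdt) : Prop :=
  s1.1 = Side.right ∧ s2.1 = Side.left ∧
  (G1.iface s1).isSome = true ∧ G1.iface s1 = G2.iface s2 ∧
  (∀ t, (G.iface t).isSome = true ↔
    ((∃ s ∈ openSlots G1.iface, s ≠ s1 ∧ ρ1 s = t) ∨
     (∃ s ∈ openSlots G2.iface, s ≠ s2 ∧ ρ2 s = t))) ∧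
  (∀ s ∈ openSlots G1.iface, s ≠ s1 → G.iface (ρ1 s) = G1.iface s) ∧
  (∀ s ∈ openSlots G2.iface, s ≠ s2 → G.iface (ρ2 s) = G2.iface s) ∧
  Set.InjOn ρ1 { s | s ∈ openSlots G1.iface ∧ s ≠ s1 } ∧
  Set.InjOn ρ2 { s | s ∈ openSlots G2.iface ∧ s ≠ s2 } ∧
  (∀ s s', s ∈ openSlots G1.iface → s ≠ s1 → s' ∈ openSlots G2.iface → s' ≠ s2 →
    ρ1 s ≠ ρ2 s') ∧
  G.behavior = { o | ∃ o1 ∈ G1.behavior, ∃ o2 ∈ G2.behavior,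
      o1 s1 = !(o2 s2) ∧
      (∀ s ∈ openSlots G1.iface, s ≠ s1 → o1 s = o (ρ1 s)) ∧
      (∀ s ∈ openSlots G2.iface, s ≠ s2 → o2 s = o (ρ2 s)) }

/-- Gadgets constructible from a collection `base` of gadgets by taking
vertical mirror images, blocking off entry points, and chaining gadgets
together by gluing tunnels. -/
inductive Buildable (base : Set Gdt) : Gdt → Prop
  | base {G : Gdt} : G ∈ base → Buildable base G
  | mirror {G : Gdt} : Buildable base G → Buildable base (vmirror G)
  | block {G1 : Gdt} {s : Slot} {G : Gdt} :
      Buildable base G1 → IsBlockOff G1 s G → Buildable base G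
  | glue {G1 G2 : Gdt} {s1 s2 : Slot} {ρ1 ρ2 : Slot → Slot} {G : Gdt} :
      Buildable base G1 → Buildable base G2 → IsGlue G1 G2 s1 s2 ρ1 ρ2 G →
      Buildable base G

/-- Notation for describing interfaces: the six arguments are the top, middle
and bottom slots of the left side followed by those of the right side. -/
def mkIface (x1 x2 x3 y1 y2 y3 : Option EColor) : Interface := fun s =>
  match s.1 with
  | Side.left => [x1, x2, x3].getD s.2.val none
  | Side.right => [y1, y2, y3].getD s.2.val none

/-- Abbreviations for slot entries. -/
def Bl : Option EColor := some EColor.blue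
def Rd : Option EColor := some EColor.red
def No : Option EColor := none

end NCLGadget

open NCLGadget

/-! Blocking off an entry point of an OR gadget leaves a gadget whose admissible orientations
are again "some remaining edge points in", now over one entry point fewer. Blocking off two of
the three entry points therefore leaves a single entry point whose edge must point in. -/

namespace NCLGadget

def Gdt.blockOff (G : Gdt) (s : Slot) : Gdt where
  iface := Function.update G.iface s none
  behavior := { o | Function.update o s false ∈ G.behavior }

theorem isBlockOff_blockOff {G : Gdt} {s : Slot} (hs : (G.iface s).isSome = true) :
    IsBlockOff G s (G.blockOff s) :=
  ⟨hs, rfl, rfl⟩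

@[simp]
theorem mem_openSlots {I : Interface} {s : Slot} : s ∈ openSlots I ↔ (I s).isSome = true := by
  simp [openSlots]

theorem openSlots_update_none (I : Interface) (s : Slot) :
    openSlots (Function.update I s none) = (openSlots I).erase s := by
  ext t
  by_cases hts : t = s <;> simp [hts]

theorem blockOff_iface_eq_none_or_blue {G : Gdt} (s : Slot)
    (hblue : ∀ t, G.iface t = none ∨ G.iface t = some EColor.blue) (t : Slot) :
    (G.blockOff s).iface t = none ∨ (G.blockOff s).iface t = some EColor.blue := by
  by_cases hts : t = s
  · simp [Gdt.blockOff, hts]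
  · simpa [Gdt.blockOff, hts] using hblue t

theorem blockOff_behavior_eq_exists {G : Gdt} (s : Slot)
    (hbeh : G.behavior = { o | ∃ t ∈ openSlots G.iface, o t = true }) :
    (G.blockOff s).behavior = { o | ∃ t ∈ openSlots (G.blockOff s).iface, o t = true } := by
  ext o
  simp only [Gdt.blockOff, hbeh, openSlots_update_none, Set.mem_ofPred_eq, Finset.mem_erase]
  constructor
  · rintro ⟨t, ht, hot⟩
    have hts : t ≠ s := by rintro rfl; simp at hot
    exact ⟨t, ⟨hts, ht⟩, by simpa [hts] using hot⟩
  · rintro ⟨t, ⟨hts, ht⟩, hot⟩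
    exact ⟨t, ht, by simpa [hts] using hot⟩

end NCLGadget

/-- **Proposition.** The constrained blue edge terminator gadget can be
constructed using any gadget that satisfies the same constraints as an NCL OR
vertex: blocking off two of its three tunnels (fixing those two edges to
point out of the vertex) yields a gadget which, attached to a tunnel
representing a blue edge, forces the blue block representing that edge's
orientation to remain inside it, so that the inflow constraint is not
violated. -/
theorem terminator_from_any_or_gadget :
    ∀ G : Gdt, IsOR G →
      ∃ (T : Gdt) (s s' : Slot) (G' : Gdt),
        IsBlockOff G s G' ∧ IsBlockOff G' s' T ∧
        Buildable {G} T ∧ IsTerminator T := by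
  rintro G ⟨hcard, hblue, hbeh⟩
  obtain ⟨a, b, c, hab, hac, hbc, hopen⟩ := Finset.card_eq_three.mp hcard
  have ha : (G.iface a).isSome = true := by simp [← mem_openSlots, hopen]
  have hopenG' : openSlots (G.blockOff a).iface = {b, c} := by
    rw [Gdt.blockOff, openSlots_update_none, hopen, Finset.erase_insert (by simp [hab, hac])]
  have hb : ((G.blockOff a).iface b).isSome = true := by simp [← mem_openSlots, hopenG']
  have hopenT : openSlots ((G.blockOff a).blockOff b).iface = {c} := by
    rw [Gdt.blockOff, openSlots_update_none, hopenG', Finset.erase_insert (by simp [hbc])]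
  have hblockA := isBlockOff_blockOff ha
  have hblockB := isBlockOff_blockOff hb
  refine ⟨(G.blockOff a).blockOff b, a, b, G.blockOff a, hblockA, hblockB,
    .block (.block (.base rfl) hblockA) hblockB, by simp [hopenT],
    blockOff_iface_eq_none_or_blue b (blockOff_iface_eq_none_or_blue a hblue), ?_⟩
  rw [blockOff_behavior_eq_exists b (blockOff_behavior_eq_exists a hbeh), hopenT]
  simp
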